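/- Let m, n be positive natural numbers, let M be a real matrix with m+n+1 rows and 2(m+n) columns, and let q ∈ ℝ^{m+n+1}. Suppose that every z ∈ ℝ^{2(m+n)} with z ≥ 0 componentwise and M z = q satisfies the complementarity relations z_k · z_{m+n+k} = 0 for all k ∈ {1, …, m+n}. Then for no k ∈ {1, …, m+n} can there exist two vectors z¹, z² ∈ ℝ^{2(m+n)}, each nonnegative componentwise with M zⁱ = q, such that z¹_k > 0 and z²_{m+n+k} > 0. -/
import Mathlib


/-- Claim 7.2: if every nonnegative solution of `M z = q` satisfies the
complementarity relations, then no index `k` admits two nonnegative solutions,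
one using column `k` and the other using its complement column `m+n+k`. -/
theorem claim72 (m n : ℕ) (hm : 0 < m) (hn : 0 < n)
    (M : Matrix (Fin (m + n + 1)) (Fin (2 * (m + n))) ℝ)
    (q : Fin (m + n + 1) → ℝ)
    (hcompl : ∀ z : Fin (2 * (m + n)) → ℝ, (∀ j, 0 ≤ z j) → M.mulVec z = q →
      ∀ k : Fin (m + n),
        z ⟨k.val, by have := k.isLt; omega⟩ *
        z ⟨m + n + k.val, by have := k.isLt; omega⟩ = 0) :
    ¬ ∃ (k : Fin (m + n)) (z₁ z₂ : Fin (2 * (m + n)) → ℝ),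
        (∀ j, 0 ≤ z₁ j) ∧ M.mulVec z₁ = q ∧
        (∀ j, 0 ≤ z₂ j) ∧ M.mulVec z₂ = q ∧
        0 < z₁ ⟨k.val, by have := k.isLt; omega⟩ ∧
        0 < z₂ ⟨m + n + k.val, by have := k.isLt; omega⟩ := by
  rintro ⟨k, z₁, z₂, h₁, e₁, h₂, e₂, p₁, p₂⟩
  set z : Fin (2 * (m + n)) → ℝ := fun j => (z₁ j + z₂ j) / 2 with hz
  have hznn : ∀ j, 0 ≤ z j := fun j => by
    have := h₁ j; have := h₂ j; simp only [hz]; linarith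
  have hzeq : M.mulVec z = q := by
    have : z = (1/2 : ℝ) • z₁ + (1/2 : ℝ) • z₂ := by
      funext j; simp [hz, smul_eq_mul]; ring
    rw [this, Matrix.mulVec_add, Matrix.mulVec_smul, Matrix.mulVec_smul, e₁, e₂]
    funext i; simp; ring
  have hc := hcompl z hznn hzeq k
  have ha : 0 < z ⟨k.val, by have := k.isLt; omega⟩ := by
    have := h₂ ⟨k.val, by have := k.isLt; omega⟩
    simp only [hz]; linarith
  have hb : 0 < z ⟨m + n + k.val, by have := k.isLt; omega⟩ := by
    have := h₁ ⟨m + n + k.val, by have := k.isLt; omega⟩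
    simp only [hz]; linarith
  nlinarith [hc, ha, hb]
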